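/- arXiv:1704.01050 — 3 statements merged into one kernel-verified Lean document; each statement's English description precedes it below -/
import Mathlib

section
/- Let T be a k-linear triangulated category with a Serre functor S, and let A ⊆ T be an admissible full triangulated subcategory with inclusion i_A and right adjoint i_A^!. Then A admits a Serre functor, given by S_A := i_A^! ∘ S ∘ i_A : A → A; that is, S_A is an autoequivalence of A with bi-functorial isomorphisms Hom_A(F, G) ≅ Hom_A(G, S_A(F))^* for all F, G ∈ A. -/
namespace HPD

open CategoryTheory Category Limits Pretriangulated

universe w v u

variable {C : Type u} [Category.{v} C]

/-- The "essential image" of a set of objects under an assignment `Φ` on objects. -/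
def essImageSet (Φ : C → C) (S : Set C) : Set C :=
  {Y : C | ∃ X ∈ S, Nonempty (Φ X ≅ Y)}

/-- The image of a set of objects under a functor to a full subcategory, regarded as a
set of objects of the ambient category (closed under isomorphism). -/
def projImageSet {Z : C → Prop} (π : C ⥤ ObjectProperty.FullSubcategory Z) (S : Set C) : Set C :=
  essImageSet (fun X : C => (π.obj X).obj) S

section Preadd

variable [Preadditive C]

/-- `HomOrth B A` : every morphism from an object of `B` to an object of `A` vanishes. -/
def HomOrth (B A : Set C) : Prop :=
  ∀ ⦃X : C⦄, X ∈ B → ∀ ⦃Y : C⦄, Y ∈ A → ∀ f : X ⟶ Y, f = 0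

/-- The right orthogonal `A^⊥` of a set of objects `A`. -/
def rightOrth (A : Set C) : Set C :=
  {Y : C | ∀ ⦃X : C⦄, X ∈ A → ∀ f : X ⟶ Y, f = 0}

/-- The left orthogonal `^⊥A` of a set of objects `A`. -/
def leftOrth (A : Set C) : Set C :=
  {X : C | ∀ ⦃Y : C⦄, Y ∈ A → ∀ f : X ⟶ Y, f = 0}

/-- A subcategory (set of objects) is admissible if the inclusion of the corresponding
full subcategory admits both a left and a right adjoint. -/
def IsAdmissibleSub (A : Set C) : Prop :=
  (ObjectProperty.ι (· ∈ A)).IsRightAdjoint ∧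
    (ObjectProperty.ι (· ∈ A)).IsLeftAdjoint

/-- `L : C ⥤ C` is a left mutation functor through `B`, i.e. it is (isomorphic to)
the composition `i_{B^⊥} ∘ i_{B^⊥}^*` of the left adjoint of the inclusion of the right
orthogonal of `B` with this inclusion. -/
def IsLeftMutation (B : Set C) (L : C ⥤ C) : Prop :=
  ∃ p : C ⥤ ObjectProperty.FullSubcategory (· ∈ rightOrth B),
    Nonempty (p ⊣ ObjectProperty.ι (· ∈ rightOrth B)) ∧
      Nonempty (L ≅ p ⋙ ObjectProperty.ι (· ∈ rightOrth B))

end Preadd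

section Triang

variable [HasZeroObject C] [Preadditive C] [HasShift C ℤ]
  [∀ n : ℤ, (shiftFunctor C n).Additive] [Pretriangulated C]

/-- A full triangulated subcategory, recorded as its (isomorphism-closed) set of objects. -/
structure IsTriangSub (A : Set C) : Prop where
  zero_mem : ∀ ⦃Z : C⦄, IsZero Z → Z ∈ A
  iso_mem : ∀ ⦃X Y : C⦄, (X ≅ Y) → X ∈ A → Y ∈ A
  shift_mem : ∀ ⦃X : C⦄ (n : ℤ), X ∈ A → (X⟦n⟧ : C) ∈ A
  cone_mem : ∀ T : Triangle C, (T ∈ distTriang C) → T.obj₁ ∈ A → T.obj₂ ∈ A → T.obj₃ ∈ A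

/-- A full triangulated subcategory is admissible if it moreover has the two adjoints. -/
def IsAdmissible (A : Set C) : Prop :=
  IsTriangSub A ∧ IsAdmissibleSub A

/-- The smallest full triangulated subcategory containing a given set of objects. -/
def generated (S : Set C) : Set C :=
  ⋂₀ {P : Set C | IsTriangSub P ∧ S ⊆ P}

/-- A semiorthogonal sequence of subcategories: no nonzero morphisms from later to
earlier ones. -/
def Semiorthogonal {n : ℕ} (A : Fin n → Set C) : Prop :=
  ∀ ⦃l k : Fin n⦄, l < k → HomOrth (A k) (A l)

/-- `t` admits a filtration `0 = t_n → t_{n-1} → ⋯ → t_0 = t` whose successive cones lie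
in the prescribed subcategories. -/
def HasFiltration {n : ℕ} (A : Fin n → Set C) (t : C) : Prop :=
  ∃ (F : Fin (n + 1) → C) (f : ∀ j : Fin n, F j.succ ⟶ F j.castSucc),
    IsZero (F (Fin.last n)) ∧ F 0 = t ∧
      ∀ j : Fin n, ∃ (a : C) (g : F j.castSucc ⟶ a) (h : a ⟶ (F j.succ)⟦(1 : ℤ)⟧),
        (Triangle.mk (f j) g h ∈ distTriang C) ∧ a ∈ A j

/-- A semiorthogonal decomposition of (the bounded derived category) `C`. -/
structure IsSOD {n : ℕ} (A : Fin n → Set C) : Prop where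
  triangSub : ∀ j, IsTriangSub (A j)
  semiorth : Semiorthogonal A
  filt : ∀ t : C, HasFiltration A t

/-- A semiorthogonal decomposition of a full triangulated subcategory `D` of `C`. -/
structure IsSODWithin (D : Set C) {n : ℕ} (A : Fin n → Set C) : Prop where
  subset : ∀ j, A j ⊆ D
  triangSub : ∀ j, IsTriangSub (A j)
  semiorth : Semiorthogonal A
  filt : ∀ t ∈ D, HasFiltration A t

/-- The `n`-th power of an autoequivalence, applied to an object. -/
def twistFun (τ : C ≌ C) : ℤ → C → C
  | Int.ofNat m => (fun X : C => τ.functor.obj X)^[m]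
  | Int.negSucc m => (fun X : C => τ.inverse.obj X)^[m + 1]

/-- The twist `S(n) = τⁿ(S)` of a set of objects (as an essential image). -/
def twistSet (τ : C ≌ C) (n : ℤ) (S : Set C) : Set C :=
  essImageSet (twistFun τ n) S

/-- A Lefschetz decomposition of `C` of length `i` with respect to the autoequivalence `τ`:
`C = ⟨A 0, (A 1)(1), …, (A (i-1))(i-1)⟩` with `A 0 ⊇ A 1 ⊇ ⋯ ⊇ A (i-1)` admissible. -/
structure IsLefschetz (τ : C ≌ C) (i : ℕ) (A : ℕ → Set C) : Prop where
  pos : 0 < i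
  desc : ∀ m : ℕ, m + 1 < i → A (m + 1) ⊆ A m
  adm : ∀ m : ℕ, m < i → IsAdmissible (A m)
  sod : IsSOD (fun j : Fin i => twistSet τ ((j : ℕ) : ℤ) (A (j : ℕ)))

/-- The primitive component `𝔞_k`, the right orthogonal of `A (k+1)` inside `A k`. -/
def primComp (A : ℕ → Set C) (m : ℕ) : Set C :=
  A m ∩ rightOrth (A (m + 1))

/-- Composition of a finite family of endofunctors: `compFam L = L 0 ∘ L 1 ∘ ⋯ ∘ L (m-1)`
(so `L (m-1)` is applied first). -/
def compFam : ∀ {m : ℕ}, (Fin m → (C ⥤ C)) → (C ⥤ C)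
  | 0, _ => 𝟭 C
  | _ + 1, L => compFam (fun j => L j.succ) ⋙ L 0

end Triang

section Serre

/-- A Serre functor on the `k`-linear triangulated category `C`: a `k`-linear exact
autoequivalence `S` together with pairings exhibiting `Hom(X, Y) ≅ Hom(Y, S X)^*`
naturally in both variables. -/
structure SerreData (k : Type w) [Field k] (C : Type u) [Category.{v} C] [Preadditive C]
    [CategoryTheory.Linear k C] [HasZeroObject C] [HasShift C ℤ]
    [∀ n : ℤ, (shiftFunctor C n).Additive] [Pretriangulated C] where
  S : C ≌ C
  additive : S.functor.Additive
  linear : letI := additive; S.functor.Linear k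
  commShift : S.functor.CommShift ℤ
  triangulated : letI := commShift; S.functor.IsTriangulated
  pairing : ∀ X Y : C, (X ⟶ Y) →ₗ[k] Module.Dual k (Y ⟶ S.functor.obj X)
  pairing_bijective : ∀ X Y : C, Function.Bijective (pairing X Y)
  pairing_nat_left : ∀ ⦃X' X Y : C⦄ (a : X' ⟶ X) (φ : X ⟶ Y) (ψ : Y ⟶ S.functor.obj X'),
    pairing X' Y (a ≫ φ) ψ = pairing X Y φ (ψ ≫ S.functor.map a)
  pairing_nat_right : ∀ ⦃X Y Y' : C⦄ (b : Y ⟶ Y') (φ : X ⟶ Y) (ψ : Y' ⟶ S.functor.obj X),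
    pairing X Y' (φ ≫ b) ψ = pairing X Y φ (b ≫ ψ)

end Serre

/-! Restricting the Serre pairing of `C` along the counit of `ι ⊣ ρ` gives perfect pairings
`Hom_A(X, Y) × Hom_A(Y, S_A X) → k`, natural in both variables. A functor with such pairings
and finite-dimensional Hom spaces is fully faithful, because its action on morphisms is the
pairing followed by the inverse of the transposed pairing. It is essentially surjective as soon
as it has a left adjoint `L` (here `i_A^* ∘ S⁻¹ ∘ i_A`): under the pairings, precomposition with
the unit `G ⟶ S_A (L G)` is the transpose of the adjunction bijection, so the unit is an
isomorphism by Yoneda. -/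

section SerreDuality

theorem _root_.CategoryTheory.Adjunction.comp_counit_bijective {D : Type*} [Category D]
    {ι : D ⥤ C} [ι.Full] [ι.Faithful] {ρ : C ⥤ D} (adj : ι ⊣ ρ) (Y : D) (Z : C) :
    Function.Bijective fun ψ : ι.obj Y ⟶ ι.obj (ρ.obj Z) => ψ ≫ adj.counit.app Z := by
  have hhom : (fun ψ : ι.obj Y ⟶ ι.obj (ρ.obj Z) => ψ ≫ adj.counit.app Z) =
      (adj.homEquiv Y Z).symm ∘ ι.preimage := by
    funext ψ
    simp [Adjunction.homEquiv_counit]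
  rw [hhom]
  exact (adj.homEquiv Y Z).symm.bijective.comp
    (Functor.FullyFaithful.ofFullyFaithful ι).homEquiv.symm.bijective

open Module Function

variable (k : Type w) [Field k] [Preadditive C] [Linear k C] {D : Type*} [Category D]

/-- Serre duality on `D`, with Hom spaces computed in the `k`-linear category `C` through `ι`. -/
structure SerrePairing (ι : D ⥤ C) (F : D ⥤ D) where
  pairing : ∀ X Y : D, (ι.obj X ⟶ ι.obj Y) →ₗ[k] Dual k (ι.obj Y ⟶ ι.obj (F.obj X))
  bijective : ∀ X Y : D, Bijective (pairing X Y)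
  nat_left : ∀ (X' X Y : D) (a : X' ⟶ X) (φ : ι.obj X ⟶ ι.obj Y)
    (ψ : ι.obj Y ⟶ ι.obj (F.obj X')),
    pairing X' Y (ι.map a ≫ φ) ψ = pairing X Y φ (ψ ≫ ι.map (F.map a))
  nat_right : ∀ (X Y Y' : D) (b : Y ⟶ Y') (φ : ι.obj X ⟶ ι.obj Y)
    (ψ : ι.obj Y' ⟶ ι.obj (F.obj X)),
    pairing X Y' (φ ≫ ι.map b) ψ = pairing X Y φ (ι.map b ≫ ψ)

variable {k}

namespace SerrePairing

variable {ι : D ⥤ C} {F : D ⥤ D}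

section

variable (P : SerrePairing k ι F)

theorem pairing_apply_map [ι.Full] {X Y : D} (f : X ⟶ Y) (ψ : ι.obj Y ⟶ ι.obj (F.obj X)) :
    P.pairing Y (F.obj X) ψ (ι.map (F.map f)) = P.pairing X Y (ι.map f) ψ := by
  obtain ⟨b, rfl⟩ := ι.map_surjective ψ
  have hleft := P.nat_left X Y (F.obj X) f (ι.map b) (𝟙 _)
  have hright := P.nat_right X Y (F.obj X) b (ι.map f) (𝟙 _)
  simp only [Category.id_comp, Category.comp_id] at hleft hright
  exact hleft.symm.trans hright

theorem pairing_apply_comp [ι.Full] {Y G Z : D} (φ : Z ⟶ Y) (f : Y ⟶ G) (u : G ⟶ F.obj Z) :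
    P.pairing Z Y (ι.map φ) (ι.map f ≫ ι.map u) =
      P.pairing Y G (ι.map f) (ι.map u ≫ ι.map (F.map φ)) := by
  rw [← P.nat_right, ← ι.map_comp, ← P.pairing_apply_map, ← P.pairing_apply_map f,
    P.nat_right, F.map_comp, ι.map_comp]

variable (hfd : ∀ X Y : D, FiniteDimensional k (ι.obj X ⟶ ι.obj Y))

noncomputable def mapLinearEquiv (X Y : D) :
    (ι.obj X ⟶ ι.obj Y) ≃ₗ[k] (ι.obj (F.obj X) ⟶ ι.obj (F.obj Y)) :=
  haveI := hfd Y (F.obj X)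
  (LinearEquiv.ofBijective (P.pairing X Y) (P.bijective X Y)).trans
    (LinearEquiv.ofBijective (P.pairing Y (F.obj X)).flip
      (LinearMap.flip_bijective_iff₁.2 (P.bijective _ _))).symm

theorem mapLinearEquiv_map [ι.Full] {X Y : D} (f : X ⟶ Y) :
    P.mapLinearEquiv hfd X Y (ι.map f) = ι.map (F.map f) := by
  rw [mapLinearEquiv, LinearEquiv.trans_apply, LinearEquiv.symm_apply_eq]
  ext ψ
  exact (P.pairing_apply_map f ψ).symm

noncomputable def fullyFaithful [ι.Full] [ι.Faithful] : F.FullyFaithful where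
  preimage g := ι.preimage ((P.mapLinearEquiv hfd _ _).symm (ι.map g))
  map_preimage g := ι.map_injective <| by
    rw [← P.mapLinearEquiv_map hfd, ι.map_preimage, LinearEquiv.apply_symm_apply]
  preimage_map f := ι.map_injective <| by
    rw [ι.map_preimage, ← P.mapLinearEquiv_map hfd, LinearEquiv.symm_apply_apply]

variable [ι.Full] [ι.Faithful] {L : D ⥤ D} (adj : L ⊣ F)

noncomputable def homLinearEquiv (G T : D) :
    (ι.obj (L.obj G) ⟶ ι.obj T) ≃ₗ[k] (ι.obj G ⟶ ι.obj (F.obj T)) :=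
  LinearEquiv.ofBijective
    (Linear.leftComp k _ (ι.map (adj.unit.app G)) ∘ₗ (P.mapLinearEquiv hfd _ _).toLinearMap) <| by
    have hmap : ⇑(Linear.leftComp k _ (ι.map (adj.unit.app G)) ∘ₗ
        (P.mapLinearEquiv hfd _ _).toLinearMap) ∘ ι.map = ι.map ∘ adj.homEquiv G T := by
      funext φ
      simp [P.mapLinearEquiv_map hfd, Adjunction.homEquiv_unit]
    rw [← Bijective.of_comp_iff _ ((Functor.FullyFaithful.ofFullyFaithful ι).map_bijective _ _),
      hmap]
    exact ((Functor.FullyFaithful.ofFullyFaithful ι).map_bijective _ _).comp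
      (adj.homEquiv G T).bijective

theorem homLinearEquiv_apply (G T : D) (φ : ι.obj (L.obj G) ⟶ ι.obj T) :
    P.homLinearEquiv hfd adj G T φ = ι.map (adj.unit.app G) ≫ P.mapLinearEquiv hfd _ _ φ :=
  rfl

end

section Unit

variable [ι.Full] [ι.Faithful] {L : D ⥤ D}

theorem comp_unit_bijective (P : SerrePairing k ι F)
    (hfd : ∀ X Y : D, FiniteDimensional k (ι.obj X ⟶ ι.obj Y)) (adj : L ⊣ F) (G T : D) :
    Bijective fun f : ι.obj T ⟶ ι.obj G => f ≫ ι.map (adj.unit.app G) := by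
  have := hfd (L.obj G) T
  let flipEquiv := LinearEquiv.ofBijective (P.pairing (L.obj G) T).flip
    (LinearMap.flip_bijective_iff₁.2 (P.bijective _ _))
  have htranspose : (fun f : ι.obj T ⟶ ι.obj G => f ≫ ι.map (adj.unit.app G)) =
      flipEquiv.symm ∘ (P.homLinearEquiv hfd adj G T).dualMap ∘ P.pairing T G := by
    funext f
    rw [comp_apply, comp_apply, eq_comm, LinearEquiv.symm_apply_eq]
    ext φ
    obtain ⟨f, rfl⟩ := ι.map_surjective f
    obtain ⟨φ, rfl⟩ := ι.map_surjective φ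
    rw [LinearEquiv.dualMap_apply, homLinearEquiv_apply, P.mapLinearEquiv_map hfd]
    exact (P.pairing_apply_comp φ f (adj.unit.app G)).symm
  rw [htranspose]
  exact flipEquiv.symm.bijective.comp
    ((P.homLinearEquiv hfd adj G T).dualMap.bijective.comp (P.bijective T G))

theorem isIso_unit_app (P : SerrePairing k ι F)
    (hfd : ∀ X Y : D, FiniteDimensional k (ι.obj X ⟶ ι.obj Y)) (adj : L ⊣ F) (G : D) :
    IsIso (adj.unit.app G) := by
  refine isIso_of_yoneda_map_bijective _ fun T => ?_
  change Bijective fun x : T ⟶ G => x ≫ adj.unit.app G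
  have hι := (Functor.FullyFaithful.ofFullyFaithful ι).map_bijective
  refine (Bijective.of_comp_iff' (hι T ((L ⋙ F).obj G)) _).1 ?_
  convert (P.comp_unit_bijective hfd adj G T).comp (hι T G) using 1
  funext x
  exact ι.map_comp x _

theorem isEquivalence (P : SerrePairing k ι F)
    (hfd : ∀ X Y : D, FiniteDimensional k (ι.obj X ⟶ ι.obj Y)) (adj : L ⊣ F) :
    F.IsEquivalence :=
  have := P.isIso_unit_app hfd adj
  { faithful := (P.fullyFaithful hfd).faithful
    full := (P.fullyFaithful hfd).full
    essSurj := ⟨fun G => ⟨L.obj G, ⟨(asIso (adj.unit.app G)).symm⟩⟩⟩ }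

end Unit

end SerrePairing

def SerrePairing.restrict {S : C ⥤ C} (P : SerrePairing k (𝟭 C) S) {ι : D ⥤ C} [ι.Full]
    [ι.Faithful] {ρ : C ⥤ D} (adj : ι ⊣ ρ) : SerrePairing k ι (ι ⋙ S ⋙ ρ) where
  pairing X Y := (Linear.rightComp k _ (adj.counit.app (S.obj (ι.obj X)))).dualMap ∘ₗ
    P.pairing (ι.obj X) (ι.obj Y)
  bijective X Y := (LinearMap.dualMap_bijective_iff.2
    (adj.comp_counit_bijective Y _)).comp (P.bijective _ _)
  nat_left X' X Y a φ ψ := by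
    simp only [LinearMap.comp_apply, LinearMap.dualMap_apply, Linear.rightComp_apply,
      Functor.comp_map]
    exact (P.nat_left _ _ _ (ι.map a) φ _).trans (congrArg (P.pairing _ _ φ) (by simp))
  nat_right X Y Y' b φ ψ := by
    simp only [LinearMap.comp_apply, LinearMap.dualMap_apply, Linear.rightComp_apply,
      Category.assoc]
    exact P.nat_right _ _ _ (ι.map b) φ _

end SerreDuality

section Statements

variable [HasZeroObject C] [Preadditive C] [HasShift C ℤ]
  [∀ n : ℤ, (shiftFunctor C n).Additive] [Pretriangulated C]

def SerreData.toSerrePairing {k : Type w} [Field k] [CategoryTheory.Linear k C]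
    (SD : SerreData k C) : SerrePairing k (𝟭 C) SD.S.functor where
  pairing := SD.pairing
  bijective := SD.pairing_bijective
  nat_left _ _ _ a φ ψ := SD.pairing_nat_left a φ ψ
  nat_right _ _ _ b φ ψ := SD.pairing_nat_right b φ ψ

/-- an admissible subcategory `A` of a `k`-linear triangulated category
with Serre functor `S` admits a Serre functor, namely `S_A := i_A^! ∘ S ∘ i_A`:
it is an autoequivalence of `A` with bifunctorial isomorphisms
`Hom_A(F, G) ≅ Hom_A(G, S_A F)^*`. -/
theorem statement12 (k : Type w) [Field k] [CategoryTheory.Linear k C]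
    (SD : SerreData k C) (hfd : ∀ X Y : C, FiniteDimensional k (X ⟶ Y))
    (A : Set C) (hA : IsAdmissible A)
    (ρ : C ⥤ ObjectProperty.FullSubcategory (· ∈ A))
    (adjR : ObjectProperty.ι (· ∈ A) ⊣ ρ) :
    (ObjectProperty.ι (· ∈ A) ⋙ SD.S.functor ⋙ ρ).IsEquivalence ∧
    ∃ pairingA : ∀ X Y : ObjectProperty.FullSubcategory (· ∈ A),
        ((ObjectProperty.ι (· ∈ A)).obj X ⟶ (ObjectProperty.ι (· ∈ A)).obj Y)
          →ₗ[k] Module.Dual k ((ObjectProperty.ι (· ∈ A)).obj Y ⟶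
            (ObjectProperty.ι (· ∈ A)).obj
              ((ObjectProperty.ι (· ∈ A) ⋙ SD.S.functor ⋙ ρ).obj X)),
      (∀ X Y, Function.Bijective (pairingA X Y)) ∧
      (∀ (X' X Y : ObjectProperty.FullSubcategory (· ∈ A)) (a : X' ⟶ X)
          (φ : (ObjectProperty.ι (· ∈ A)).obj X ⟶ (ObjectProperty.ι (· ∈ A)).obj Y)
          (ψ : (ObjectProperty.ι (· ∈ A)).obj Y ⟶
            (ObjectProperty.ι (· ∈ A)).obj
              ((ObjectProperty.ι (· ∈ A) ⋙ SD.S.functor ⋙ ρ).obj X')),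
        pairingA X' Y ((ObjectProperty.ι (· ∈ A)).map a ≫ φ) ψ =
          pairingA X Y φ (ψ ≫ (ObjectProperty.ι (· ∈ A)).map
            ((ObjectProperty.ι (· ∈ A) ⋙ SD.S.functor ⋙ ρ).map a))) ∧
      (∀ (X Y Y' : ObjectProperty.FullSubcategory (· ∈ A)) (b : Y ⟶ Y')
          (φ : (ObjectProperty.ι (· ∈ A)).obj X ⟶ (ObjectProperty.ι (· ∈ A)).obj Y)
          (ψ : (ObjectProperty.ι (· ∈ A)).obj Y' ⟶
            (ObjectProperty.ι (· ∈ A)).obj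
              ((ObjectProperty.ι (· ∈ A) ⋙ SD.S.functor ⋙ ρ).obj X)),
        pairingA X Y' (φ ≫ (ObjectProperty.ι (· ∈ A)).map b) ψ =
          pairingA X Y φ ((ObjectProperty.ι (· ∈ A)).map b ≫ ψ)) := by
  have := hA.2.1
  let P := SD.toSerrePairing.restrict adjR
  exact ⟨P.isEquivalence (fun _ _ => hfd _ _)
      (adjR.comp (SD.S.symm.toAdjunction.comp (Adjunction.ofIsRightAdjoint _))),
    P.pairing, P.bijective, P.nat_left, P.nat_right⟩

end Statements
end HPD
end

section
/- Let T = ⟨A_1, …, A_n⟩ be a semiorthogonal decomposition of a triangulated category T. Then for every object t ∈ T the chain of morphisms 0 = t_n → t_{n−1} → … → t_0 = t with cone(t_k → t_{k−1}) ∈ A_k is unique up to canonical isomorphism; moreover, every morphism f : t → t′ lifts uniquely to a morphism of such chains (a family f_k : t_k → t′_k with f_0 = f commuting with the chain maps), and the induced morphisms on the cones make the assignment t ↦ a_k (the component of t in A_k) a functor pr_k : T → A_k, called the projection functor onto A_k. -/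
/-!
By induction along a filtration, using semiorthogonality, the stage `t_k` has no nonzero maps
to `A_l` for `l < k`, and neither has any shift of it. So in the triangle
`t'_{k+1} → t'_k → a'_k`, every map `t_{k+1} → t'_k` factors uniquely through `t'_{k+1}`, and a
map `a_k → a'_k` is determined by its composite with `t_k → a_k`. Hence a morphism lifts uniquely,
stage by stage, to the filtrations, and it induces unique maps on the cones. Uniqueness makes lifts
and cone maps compatible with identities and composition: the lifts of `𝟙 t` are the canonical
isomorphisms, and the cone maps for a chosen filtration of every object form the projection
functors.
-/

namespace HPD

open CategoryTheory Category Limits Pretriangulated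

universe w v u

variable {C : Type u} [Category.{v} C]

section Statements

variable [HasZeroObject C] [Preadditive C] [HasShift C ℤ]
  [∀ n : ℤ, (shiftFunctor C n).Additive] [Pretriangulated C]

/-- A filtration `0 = t_n → t_{n-1} → ⋯ → t_0 = t` of an object `t` with chosen cones
`a j ∈ A j`, as in the definition of a semiorthogonal decomposition. -/
structure SODFilt {n : ℕ} (A : Fin n → Set C) (t : C) where
  F : Fin (n + 1) → C
  f : ∀ j : Fin n, F j.succ ⟶ F j.castSucc
  isZero_last : IsZero (F (Fin.last n))
  base : F 0 = t
  a : Fin n → C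
  g : ∀ j : Fin n, F j.castSucc ⟶ a j
  h : ∀ j : Fin n, a j ⟶ (F j.succ)⟦(1 : ℤ)⟧
  dist : ∀ j : Fin n, Triangle.mk (f j) (g j) (h j) ∈ distTriang C
  mem : ∀ j : Fin n, a j ∈ A j

theorem existsUnique_seq_of_existsUnique_step {n : ℕ} {X : Fin (n + 1) → Sort*} (x₀ : X 0)
    (R : ∀ j : Fin n, X j.castSucc → X j.succ → Prop) (hR : ∀ j u, ∃! v, R j u v) :
    ∃! x : ∀ j, X j, x 0 = x₀ ∧ ∀ j, R j (x j.castSucc) (x j.succ) := by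
  choose step hstep hstep_unique using hR
  refine ⟨Fin.induction x₀ step, ⟨rfl, fun j => hstep j _⟩, ?_⟩
  rintro x ⟨hx₀, hx⟩
  funext j
  induction j using Fin.induction with
  | zero => exact hx₀
  | succ j ih =>
    have hxj := hx j
    rw [ih] at hxj
    exact hstep_unique j _ _ hxj

theorem obj₂_mem_leftOrth_of_distTriang {B : Set C} {T : Triangle C} (hT : T ∈ distTriang C)
    (h₁ : T.obj₁ ∈ leftOrth B) (h₃ : T.obj₃ ∈ leftOrth B) : T.obj₂ ∈ leftOrth B := by
  intro Y hY f
  obtain ⟨g, rfl⟩ := Triangle.yoneda_exact₂ T hT f (h₁ hY _)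
  rw [h₃ hY g, comp_zero]

theorem IsTriangSub.shift_mem_leftOrth {B : Set C} (hB : IsTriangSub B) {X : C}
    (hX : X ∈ leftOrth B) (m : ℤ) : (X⟦m⟧ : C) ∈ leftOrth B := by
  intro Y hY f
  let adj := (shiftEquiv C m).toAdjunction
  have hf : adj.homEquiv X Y f = 0 := hX (hB.shift_mem (-m) hY) _
  rw [← (adj.homEquiv X Y).symm_apply_apply f, hf, adj.homEquiv_counit, Functor.map_zero]
  exact zero_comp

theorem comp_mor₁_bijective {T : Triangle C} (hT : T ∈ distTriang C) {W : C}
    (h₃ : ∀ f : W ⟶ T.obj₃, f = 0) (h₃' : ∀ f : W ⟶ T.obj₃⟦(-1 : ℤ)⟧, f = 0) :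
    Function.Bijective (fun v : W ⟶ T.obj₁ => v ≫ T.mor₁) := by
  refine ⟨fun v v' hvv' => ?_, fun x => ?_⟩
  · have hvv'₀ : (v - v') ≫ T.mor₁ = 0 := by rw [Preadditive.sub_comp, sub_eq_zero]; exact hvv'
    obtain ⟨g, hg⟩ := Triangle.coyoneda_exact₂ _ (inv_rot_of_distTriang _ hT) (v - v') hvv'₀
    rw [← sub_eq_zero, hg, show g = 0 from h₃' g]
    exact zero_comp
  · obtain ⟨v, hv⟩ := Triangle.coyoneda_exact₂ T hT x (h₃ _)
    exact ⟨v, hv.symm⟩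

theorem mor₂_comp_injective {T : Triangle C} (hT : T ∈ distTriang C) {Y : C}
    (h₁ : ∀ f : T.obj₁⟦(1 : ℤ)⟧ ⟶ Y, f = 0) :
    Function.Injective (fun c : T.obj₃ ⟶ Y => T.mor₂ ≫ c) := by
  intro c c' hcc'
  obtain ⟨g, hg⟩ := Triangle.yoneda_exact₃ T hT (c - c')
    (by simpa only [Preadditive.comp_sub, sub_eq_zero] using hcc')
  rw [← sub_eq_zero, hg, h₁ g, comp_zero]

namespace SODFilt

variable {n : ℕ} {A : Fin n → Set C}

theorem F_mem_leftOrth (hA : Semiorthogonal A) {t : C} (P : SODFilt A t) :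
    ∀ (k : Fin (n + 1)) {l : Fin n}, l.castSucc < k → P.F k ∈ leftOrth (A l) := by
  intro k
  induction k using Fin.reverseInduction with
  | last =>
    intro _ _ _ _ f
    exact P.isZero_last.eq_of_src f 0
  | cast i ih =>
    intro l hli
    exact obj₂_mem_leftOrth_of_distTriang (P.dist i)
      (ih (hli.trans Fin.castSucc_lt_succ))
      (fun _ hY f => hA (Fin.castSucc_lt_castSucc_iff.mp hli) (P.mem i) hY f)

theorem existsUnique_lift_step (hA : Semiorthogonal A) (hA' : ∀ j, IsTriangSub (A j))
    {t t' : C} (P : SODFilt A t) (Q : SODFilt A t') (j : Fin n)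
    (u : P.F j.castSucc ⟶ Q.F j.castSucc) :
    ∃! v : P.F j.succ ⟶ Q.F j.succ, P.f j ≫ u = v ≫ Q.f j := by
  have hP := P.F_mem_leftOrth hA j.succ Fin.castSucc_lt_succ
  obtain ⟨v, hv, hv_unique⟩ := (comp_mor₁_bijective (Q.dist j) (hP (Q.mem j))
    (hP ((hA' j).shift_mem (-1) (Q.mem j)))).existsUnique (P.f j ≫ u)
  exact ⟨v, hv.symm, fun v' hv' => hv_unique v' hv'.symm⟩

theorem existsUnique_lift (hA : Semiorthogonal A) (hA' : ∀ j, IsTriangSub (A j))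
    {t t' : C} (φ : t ⟶ t') (P : SODFilt A t) (Q : SODFilt A t') :
    ∃! ψ : ∀ j : Fin (n + 1), P.F j ⟶ Q.F j,
      ψ 0 = eqToHom P.base ≫ φ ≫ eqToHom Q.base.symm ∧
      ∀ j : Fin n, P.f j ≫ ψ j.castSucc = ψ j.succ ≫ Q.f j :=
  existsUnique_seq_of_existsUnique_step (X := fun j => P.F j ⟶ Q.F j) _
    (fun j u v => P.f j ≫ u = v ≫ Q.f j) (existsUnique_lift_step hA hA' P Q)

variable (hSOD : IsSOD A)

noncomputable def lift {t t' : C} (φ : t ⟶ t') (P : SODFilt A t) (Q : SODFilt A t') :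
    ∀ j : Fin (n + 1), P.F j ⟶ Q.F j :=
  (existsUnique_lift hSOD.semiorth hSOD.triangSub φ P Q).exists.choose

theorem lift_zero {t t' : C} (φ : t ⟶ t') (P : SODFilt A t) (Q : SODFilt A t') :
    lift hSOD φ P Q 0 = eqToHom P.base ≫ φ ≫ eqToHom Q.base.symm :=
  (existsUnique_lift hSOD.semiorth hSOD.triangSub φ P Q).exists.choose_spec.1

theorem f_comp_lift {t t' : C} (φ : t ⟶ t') (P : SODFilt A t) (Q : SODFilt A t') (j : Fin n) :
    P.f j ≫ lift hSOD φ P Q j.castSucc = lift hSOD φ P Q j.succ ≫ Q.f j :=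
  (existsUnique_lift hSOD.semiorth hSOD.triangSub φ P Q).exists.choose_spec.2 j

theorem eq_lift {t t' : C} {φ : t ⟶ t'} {P : SODFilt A t} {Q : SODFilt A t'}
    {ψ : ∀ j : Fin (n + 1), P.F j ⟶ Q.F j}
    (h₀ : ψ 0 = eqToHom P.base ≫ φ ≫ eqToHom Q.base.symm)
    (hψ : ∀ j : Fin n, P.f j ≫ ψ j.castSucc = ψ j.succ ≫ Q.f j) :
    ψ = lift hSOD φ P Q :=
  (existsUnique_lift hSOD.semiorth hSOD.triangSub φ P Q).unique ⟨h₀, hψ⟩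
    ⟨lift_zero hSOD φ P Q, f_comp_lift hSOD φ P Q⟩

theorem lift_id {t : C} (P : SODFilt A t) : lift hSOD (𝟙 t) P P = fun _ => 𝟙 _ :=
  (eq_lift hSOD (by simp) (by simp)).symm

theorem lift_comp_lift {t t' t'' : C} (φ : t ⟶ t') (φ' : t' ⟶ t'')
    (P : SODFilt A t) (Q : SODFilt A t') (R : SODFilt A t'') (j : Fin (n + 1)) :
    lift hSOD φ P Q j ≫ lift hSOD φ' Q R j = lift hSOD (φ ≫ φ') P R j := by
  refine congrFun (eq_lift hSOD (ψ := fun j => lift hSOD φ P Q j ≫ lift hSOD φ' Q R j) ?_ ?_) j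
  · simp only [lift_zero, assoc, eqToHom_trans_assoc, eqToHom_refl, id_comp]
  · intro j
    simp only [← assoc, f_comp_lift]
    simp only [assoc, f_comp_lift]

theorem isIso_lift_id {t : C} (P Q : SODFilt A t) (j : Fin (n + 1)) :
    IsIso (lift hSOD (𝟙 t) P Q j) :=
  ⟨lift hSOD (𝟙 t) Q P j, by rw [lift_comp_lift, comp_id, lift_id],
    by rw [lift_comp_lift, comp_id, lift_id]⟩

noncomputable def coneMap {t t' : C} (φ : t ⟶ t') (P : SODFilt A t) (Q : SODFilt A t')
    (l : Fin n) : P.a l ⟶ Q.a l :=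
  (complete_distinguished_triangle_morphism _ _ (P.dist l) (Q.dist l) _ _
    (f_comp_lift hSOD φ P Q l)).choose

theorem g_comp_coneMap {t t' : C} (φ : t ⟶ t') (P : SODFilt A t) (Q : SODFilt A t')
    (l : Fin n) : P.g l ≫ coneMap hSOD φ P Q l = lift hSOD φ P Q l.castSucc ≫ Q.g l :=
  (complete_distinguished_triangle_morphism _ _ (P.dist l) (Q.dist l) _ _
    (f_comp_lift hSOD φ P Q l)).choose_spec.1

theorem eq_coneMap {t t' : C} {φ : t ⟶ t'} {P : SODFilt A t} {Q : SODFilt A t'} {l : Fin n}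
    {c : P.a l ⟶ Q.a l} (hc : P.g l ≫ c = lift hSOD φ P Q l.castSucc ≫ Q.g l) :
    c = coneMap hSOD φ P Q l :=
  mor₂_comp_injective (P.dist l)
    (fun f => (hSOD.triangSub l).shift_mem_leftOrth
      (P.F_mem_leftOrth hSOD.semiorth l.succ Fin.castSucc_lt_succ) 1 (Q.mem l) f)
    (hc.trans (g_comp_coneMap hSOD φ P Q l).symm)

theorem coneMap_id {t : C} (P : SODFilt A t) (l : Fin n) : coneMap hSOD (𝟙 t) P P l = 𝟙 _ :=
  (eq_coneMap hSOD (by rw [lift_id]; simp)).symm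

theorem coneMap_comp_coneMap {t t' t'' : C} (φ : t ⟶ t') (φ' : t' ⟶ t'')
    (P : SODFilt A t) (Q : SODFilt A t') (R : SODFilt A t'') (l : Fin n) :
    coneMap hSOD φ P Q l ≫ coneMap hSOD φ' Q R l = coneMap hSOD (φ ≫ φ') P R l :=
  eq_coneMap hSOD (by
    rw [← assoc, g_comp_coneMap, assoc, g_comp_coneMap, ← assoc, lift_comp_lift])

noncomputable def coneIso {t : C} (P Q : SODFilt A t) (l : Fin n) : P.a l ≅ Q.a l where
  hom := coneMap hSOD (𝟙 t) P Q l
  inv := coneMap hSOD (𝟙 t) Q P l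
  hom_inv_id := by rw [coneMap_comp_coneMap, comp_id, coneMap_id]
  inv_hom_id := by rw [coneMap_comp_coneMap, comp_id, coneMap_id]

end SODFilt

variable {n : ℕ} {A : Fin n → Set C}

noncomputable def IsSOD.filtration (hSOD : IsSOD A) (t : C) : SODFilt A t :=
  Classical.choice <| by
    obtain ⟨F, f, hF, hF₀, hcone⟩ := hSOD.filt t
    choose a g h hdist hmem using hcone
    exact ⟨⟨F, f, hF, hF₀, a, g, h, hdist, hmem⟩⟩

noncomputable def IsSOD.proj (hSOD : IsSOD A) (l : Fin n) : C ⥤ C where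
  obj t := (hSOD.filtration t).a l
  map φ := SODFilt.coneMap hSOD φ _ _ l
  map_id _ := SODFilt.coneMap_id hSOD _ l
  map_comp φ φ' := (SODFilt.coneMap_comp_coneMap hSOD φ φ' _ _ _ l).symm

theorem IsSOD.proj_map_eq (hSOD : IsSOD A) (l : Fin n) {t t' : C} (φ : t ⟶ t')
    (P : SODFilt A t) (Q : SODFilt A t') :
    (hSOD.proj l).map φ = (SODFilt.coneIso hSOD _ P l).hom ≫ SODFilt.coneMap hSOD φ P Q l ≫
      (SODFilt.coneIso hSOD _ Q l).inv := by
  simp only [proj, SODFilt.coneIso, SODFilt.coneMap_comp_coneMap, id_comp, comp_id]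

/-- in a semiorthogonal decomposition `T = ⟨A 0, …, A (n-1)⟩`,
(1) every morphism `φ : t ⟶ t'` lifts uniquely to a morphism of filtrations;
(2) the filtration of an object is unique up to canonical isomorphism (the unique lift of
the identity consists of isomorphisms);
(3) for each `j`, the assignment `t ↦ a j` underlies a projection functor `pr : T ⥤ A j`,
compatible with the induced morphisms on the cones. -/
theorem statement14 {n : ℕ} (A : Fin n → Set C) (hSOD : IsSOD A) :
    (∀ (t t' : C) (φ : t ⟶ t') (P : SODFilt A t) (Q : SODFilt A t'),
      ∃! ψ : ∀ j : Fin (n + 1), P.F j ⟶ Q.F j,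
        ψ 0 = eqToHom P.base ≫ φ ≫ eqToHom Q.base.symm ∧
        ∀ j : Fin n, P.f j ≫ ψ j.castSucc = ψ j.succ ≫ Q.f j) ∧
    (∀ (t : C) (P Q : SODFilt A t) (ψ : ∀ j : Fin (n + 1), P.F j ⟶ Q.F j),
      ψ 0 = eqToHom P.base ≫ 𝟙 t ≫ eqToHom Q.base.symm →
      (∀ j : Fin n, P.f j ≫ ψ j.castSucc = ψ j.succ ≫ Q.f j) →
      ∀ j : Fin (n + 1), IsIso (ψ j)) ∧
    (∀ l : Fin n, ∃ pr : C ⥤ C,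
      (∀ t : C, pr.obj t ∈ A l) ∧
      ∃ e : ∀ (t : C) (P : SODFilt A t), pr.obj t ≅ P.a l,
        ∀ (t t' : C) (φ : t ⟶ t') (P : SODFilt A t) (Q : SODFilt A t')
          (ψ : ∀ j : Fin (n + 1), P.F j ⟶ Q.F j),
          ψ 0 = eqToHom P.base ≫ φ ≫ eqToHom Q.base.symm →
          (∀ j : Fin n, P.f j ≫ ψ j.castSucc = ψ j.succ ≫ Q.f j) →
          ∀ c : P.a l ⟶ Q.a l,
            P.g l ≫ c = ψ l.castSucc ≫ Q.g l →
            P.h l ≫ (shiftFunctor C (1 : ℤ)).map (ψ l.succ) = c ≫ Q.h l →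
            pr.map φ = (e t P).hom ≫ c ≫ (e t' Q).inv) := by
  refine ⟨fun t t' φ P Q => SODFilt.existsUnique_lift hSOD.semiorth hSOD.triangSub φ P Q,
    fun t P Q ψ h₀ hψ j => ?_, fun l => ⟨hSOD.proj l, fun t => (hSOD.filtration t).mem l,
      fun _ P => SODFilt.coneIso hSOD _ P l, fun t t' φ P Q ψ h₀ hψ c hc _ => ?_⟩⟩
  · rw [SODFilt.eq_lift hSOD h₀ hψ]
    exact SODFilt.isIso_lift_id hSOD P Q j
  · rw [SODFilt.eq_lift hSOD h₀ hψ] at hc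
    rw [SODFilt.eq_coneMap hSOD hc]
    exact hSOD.proj_map_eq l φ P Q

end Statements
end HPD
end

section
/- Let T = ⟨A_0, A_1(1), …, A_{i−1}(i−1)⟩ be a Lefschetz decomposition of length i of a triangulated category T with respect to an exact autoequivalence τ. Then each component is recovered from the first one: for every 1 ≤ k ≤ i−1, A_k = ^⊥(A_0(−k)) ∩ A_{k−1} (intersection of full subcategories of T). In particular, a Lefschetz decomposition with respect to τ is completely determined by its first component A_0. -/
namespace HPD

open CategoryTheory Category Limits Pretriangulated

universe w v u

variable {C : Type u} [Category.{v} C]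

/-! The inclusion `A m ⊆ ^⊥(A 0 (-m)) ∩ A (m-1)` is semiorthogonality of `A m (m)` against
`A 0`, moved by `τ^(-m)`. Conversely, take `t` in the right-hand side and complete the
counit `a → t` of the right adjoint of `A m ⊆ T` to a triangle `a → t → b`, so that
`a ∈ A m` and `b ∈ (A m)^⊥`. Then also `b ∈ A (m-1) ∩ ^⊥(A 0 (-m))`; these conditions
say that `τ^m b` admits no maps to the components `A j (j)` with `j < m` and receives none
from those with `j ≥ m`, which forces `τ^m b = 0`; hence `a ≅ t`.
Uniqueness follows by induction on `m`. -/

lemma forall_eq_zero_iff_subsingleton [Preadditive C] {X Y : C} :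
    (∀ f : X ⟶ Y, f = 0) ↔ Subsingleton (X ⟶ Y) :=
  (subsingleton_iff_forall_eq 0).symm

lemma mem_leftOrth_iff [Preadditive C] {S : Set C} {X : C} :
    X ∈ leftOrth S ↔ ∀ Y ∈ S, Subsingleton (X ⟶ Y) :=
  forall₂_congr fun _ _ => forall_eq_zero_iff_subsingleton

lemma mem_rightOrth_iff [Preadditive C] {S : Set C} {Y : C} :
    Y ∈ rightOrth S ↔ ∀ X ∈ S, Subsingleton (X ⟶ Y) :=
  forall₂_congr fun _ _ => forall_eq_zero_iff_subsingleton

lemma mem_leftOrth_essImageSet_iff [Preadditive C] {Φ : C → C} {S : Set C} {X : C} :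
    X ∈ leftOrth (essImageSet Φ S) ↔ ∀ x ∈ S, Subsingleton (X ⟶ Φ x) := by
  refine mem_leftOrth_iff.trans ⟨fun h x hx => h _ ⟨x, hx, ⟨Iso.refl _⟩⟩, ?_⟩
  rintro h Y ⟨x, hx, ⟨e⟩⟩
  exact ((Iso.refl X).homCongr e).subsingleton_congr.1 (h x hx)

lemma mem_rightOrth_essImageSet_iff [Preadditive C] {Φ : C → C} {S : Set C} {Y : C} :
    Y ∈ rightOrth (essImageSet Φ S) ↔ ∀ x ∈ S, Subsingleton (Φ x ⟶ Y) := by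
  refine mem_rightOrth_iff.trans ⟨fun h x hx => h _ ⟨x, hx, ⟨Iso.refl _⟩⟩, ?_⟩
  rintro h X ⟨x, hx, ⟨e⟩⟩
  exact (e.homCongr (Iso.refl Y)).subsingleton_congr.1 (h x hx)

lemma _root_.CategoryTheory.Equivalence.powNat_functor_obj (e : C ≌ C) :
    ∀ (n : ℕ) (X : C), (e.powNat n).functor.obj X = e.functor.obj^[n] X
  | 0, _ => rfl
  | 1, _ => rfl
  | n + 2, X => e.powNat_functor_obj (n + 1) (e.functor.obj X)

lemma _root_.CategoryTheory.Equivalence.powNat_inverse_obj (e : C ≌ C) :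
    ∀ (n : ℕ) (X : C), (e.powNat n).inverse.obj X = e.inverse.obj^[n] X
  | 0, _ => rfl
  | 1, _ => rfl
  | n + 2, X => by
    rw [Function.iterate_succ_apply', ← e.powNat_inverse_obj (n + 1) X]
    rfl

lemma _root_.CategoryTheory.Equivalence.powNat_add_functor_obj (e : C ≌ C) (m n : ℕ) (X : C) :
    (e.powNat (m + n)).functor.obj X = (e.powNat m).functor.obj ((e.powNat n).functor.obj X) := by
  simp only [Equivalence.powNat_functor_obj, Function.iterate_add_apply]

lemma subsingleton_hom_powNat_add_iff (e : C ≌ C) (m n : ℕ) (X Y : C) :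
    Subsingleton ((e.powNat (m + n)).functor.obj X ⟶ (e.powNat m).functor.obj Y) ↔
      Subsingleton ((e.powNat n).functor.obj X ⟶ Y) := by
  rw [e.powNat_add_functor_obj]
  exact (e.powNat m).fullyFaithfulFunctor.homEquiv.subsingleton_congr.symm

lemma twistFun_natCast [Preadditive C] [HasShift C ℤ] (τ : C ≌ C) (n : ℕ) :
    twistFun τ n = (τ.powNat n).functor.obj :=
  funext fun X => (τ.powNat_functor_obj n X).symm

lemma twistFun_neg_natCast [Preadditive C] [HasShift C ℤ] (τ : C ≌ C) (n : ℕ) :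
    twistFun τ (-n) = (τ.powNat n).inverse.obj := by
  funext X
  rw [τ.powNat_inverse_obj]
  cases n <;> rfl

lemma comp_counit_bijective {A : Set C} {R : C ⥤ ObjectProperty.FullSubcategory (· ∈ A)}
    (adj : ObjectProperty.ι (· ∈ A) ⊣ R) {w : C} (hw : w ∈ A) (t : C) :
    Function.Bijective fun χ : w ⟶ (R.obj t).obj => χ ≫ adj.counit.app t := by
  let e : (w ⟶ (R.obj t).obj) ≃ (w ⟶ t) :=
    (ObjectProperty.fullyFaithfulι _).homEquiv.symm.trans (adj.homEquiv ⟨w, hw⟩ t).symm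
  have he : (fun χ : w ⟶ (R.obj t).obj => χ ≫ adj.counit.app t) = e := by
    funext χ
    rw [Equiv.trans_apply, Adjunction.homEquiv_counit]
    rfl
  exact he ▸ e.bijective

section Statements

variable [HasZeroObject C] [Preadditive C] [HasShift C ℤ]
  [∀ n : ℤ, (shiftFunctor C n).Additive] [Pretriangulated C]

lemma IsTriangSub.mem_rightOrth_of_distTriang {A : Set C} (hA : IsTriangSub A) {a t b : C}
    {f : a ⟶ t} {g : t ⟶ b} {h : b ⟶ a⟦(1 : ℤ)⟧}
    (hT : Triangle.mk f g h ∈ distTriang C)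
    (hf : ∀ w ∈ A, Function.Bijective fun χ : w ⟶ a => χ ≫ f) : b ∈ rightOrth A := by
  intro w hw φ
  -- `χ ↦ χ ≫ f` is also injective on maps `w ⟶ a⟦1⟧`, since these correspond to maps
  -- `w⟦-1⟧ ⟶ a` and `w⟦-1⟧ ∈ A`.
  have hφh : φ ≫ h = 0 := by
    let sh := (shiftEquiv C (1 : ℤ)).symm.toAdjunction
    have sh_zero : ∀ X Y : C, sh.homEquiv X Y 0 = 0 := fun X Y => by
      simp [sh, Adjunction.homEquiv_unit]
    obtain ⟨χ, hχ⟩ := (sh.homEquiv _ _).surjective (φ ≫ h)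
    have hχf : χ ≫ f = 0 := by
      apply (sh.homEquiv _ _).injective
      have : sh.homEquiv _ _ (χ ≫ f) = φ ≫ h ≫ f⟦(1 : ℤ)⟧' := by
        rw [sh.homEquiv_naturality_right, hχ]
        exact assoc _ _ _
      have h31 : h ≫ f⟦(1 : ℤ)⟧' = 0 := comp_distTriang_mor_zero₃₁ _ hT
      rw [this, h31, comp_zero]
      exact (sh_zero _ _).symm
    have hχ0 : χ = 0 := (hf _ (hA.shift_mem (-1) hw)).injective (hχf.trans zero_comp.symm)
    exact hχ.symm.trans (hχ0 ▸ sh_zero _ _)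
  obtain ⟨ψ, rfl⟩ := Triangle.coyoneda_exact₃ _ hT φ hφh
  obtain ⟨ψ', rfl⟩ := (hf w hw).surjective ψ
  have h12 : f ≫ g = 0 := comp_distTriang_mor_zero₁₂ _ hT
  show (ψ' ≫ f) ≫ g = 0
  rw [assoc, h12, comp_zero]

lemma IsTriangSub.exists_distTriang_mem_rightOrth {A : Set C} (hA : IsTriangSub A)
    [(ObjectProperty.ι (· ∈ A)).IsLeftAdjoint] (t : C) :
    ∃ (a b : C) (f : a ⟶ t) (g : t ⟶ b) (h : b ⟶ a⟦(1 : ℤ)⟧),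
      Triangle.mk f g h ∈ distTriang C ∧ a ∈ A ∧ b ∈ rightOrth A := by
  let adj := Adjunction.ofIsLeftAdjoint (ObjectProperty.ι (· ∈ A))
  obtain ⟨b, g, h, hT⟩ := distinguished_cocone_triangle (adj.counit.app t)
  exact ⟨_, b, _, g, h, hT, ((ObjectProperty.ι (· ∈ A)).rightAdjoint.obj t).property,
    hA.mem_rightOrth_of_distTriang hT fun w hw => comp_counit_bijective adj hw t⟩

lemma HasFiltration.isZero_of_mem_leftOrth_of_mem_rightOrth {n : ℕ} {B : Fin n → Set C} {y : C}
    (hy : HasFiltration B y) (m : ℕ) (hm : m ≤ n)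
    (hlow : ∀ j : Fin n, (j : ℕ) < m → y ∈ leftOrth (B j))
    (hhigh : ∀ j : Fin n, m ≤ (j : ℕ) → y ∈ rightOrth (B j)) : IsZero y := by
  -- `y = F 0` is a retract of the stage `F m`, yet every map `F m ⟶ F 0` vanishes.
  obtain ⟨F, f, hzero, rfl, htri⟩ := hy
  choose a g h hT ha using htri
  have down : ∀ j : Fin (n + 1), m ≤ (j : ℕ) → ∀ φ : F j ⟶ F 0, φ = 0 := by
    refine Fin.reverseInduction (fun _ φ => hzero.eq_of_src φ 0) fun j ih hj φ => ?_
    simp only [Fin.val_castSucc] at hj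
    have hφ : f j ≫ φ = 0 := ih (by simp only [Fin.val_succ]; omega) _
    obtain ⟨ψ, rfl⟩ := Triangle.yoneda_exact₂ _ (hT j) φ hφ
    rw [show ψ = 0 from hhigh j hj (ha j) ψ]
    exact comp_zero
  have up : ∀ j : Fin (n + 1), (j : ℕ) ≤ m →
      ∃ (χ : F 0 ⟶ F j) (ρ : F j ⟶ F 0), χ ≫ ρ = 𝟙 _ := by
    refine Fin.induction (fun _ => ⟨𝟙 _, 𝟙 _, comp_id _⟩) fun j ih hj => ?_
    simp only [Fin.val_succ] at hj
    obtain ⟨χ, ρ, hχρ⟩ := ih (by simp only [Fin.val_castSucc]; omega)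
    obtain ⟨χ', rfl⟩ := Triangle.coyoneda_exact₂ _ (hT j) χ (hlow j (by omega) (ha j) _)
    exact ⟨χ', f j ≫ ρ, (assoc _ _ _).symm.trans hχρ⟩
  obtain ⟨χ, ρ, hχρ⟩ := up ⟨m, by omega⟩ le_rfl
  rw [IsZero.iff_id_eq_zero, ← hχρ, down ⟨m, by omega⟩ le_rfl ρ, comp_zero]

namespace IsLefschetz

variable {τ : C ≌ C} {i : ℕ} {A : ℕ → Set C}

lemma subset_of_le (hL : IsLefschetz τ i A) {j l : ℕ} (hjl : j ≤ l) (hl : l < i) :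
    A l ⊆ A j := by
  induction l, hjl using Nat.le_induction with
  | base => exact subset_rfl
  | succ l hjl ih => exact (hL.desc l hl).trans (ih (by omega))

lemma powNat_mem_leftOrth (hL : IsLefschetz τ i A) {d : ℕ} (hd : 0 < d) (hdi : d < i) {x : C}
    (hx : x ∈ A d) : (τ.powNat d).functor.obj x ∈ leftOrth (A 0) := fun z hz =>
  hL.sod.semiorth (l := ⟨0, hL.pos⟩) (k := ⟨d, hdi⟩) hd
    ⟨x, hx, ⟨eqToIso (congrFun (twistFun_natCast τ d) x)⟩⟩ ⟨z, hz, ⟨Iso.refl z⟩⟩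

lemma subset_leftOrth (hL : IsLefschetz τ i A) {m : ℕ} (hm : 0 < m) (hmi : m < i) :
    A m ⊆ leftOrth (twistSet τ (-m) (A 0)) := by
  intro x hx
  rw [twistSet, twistFun_neg_natCast, mem_leftOrth_essImageSet_iff]
  intro z hz
  exact ((τ.powNat m).toAdjunction.homEquiv x z).subsingleton_congr.1
    (mem_leftOrth_iff.1 (hL.powNat_mem_leftOrth hm hmi hx) z hz)

lemma isZero_of_mem_leftOrth_of_mem_rightOrth (hL : IsLefschetz τ i A) {k : ℕ}
    (hki : k + 1 < i) {b : C} (hb : b ∈ A k) (hb₁ : b ∈ rightOrth (A (k + 1)))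
    (hb₀ : b ∈ leftOrth (twistSet τ (-(k + 1 : ℕ)) (A 0))) : IsZero b := by
  have hb_twist : ∀ d, 0 < d → d ≤ k + 1 →
      (τ.powNat d).functor.obj b ∈ leftOrth (A 0) := by
    intro d hd hdk
    rcases hdk.lt_or_eq with hdk | rfl
    · exact hL.powNat_mem_leftOrth hd (by omega) (hL.subset_of_le (by omega) (by omega) hb)
    · rw [twistSet, twistFun_neg_natCast, mem_leftOrth_essImageSet_iff] at hb₀
      exact mem_leftOrth_iff.2 fun z hz =>
        ((τ.powNat _).toAdjunction.homEquiv b z).subsingleton_congr.2 (hb₀ z hz)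
  suffices IsZero ((τ.powNat (k + 1)).functor.obj b) from
    IsZero.of_full_of_faithful_of_isZero _ b this
  refine (hL.sod.filt _).isZero_of_mem_leftOrth_of_mem_rightOrth (k + 1) hki.le
    (fun j hj => ?_) (fun j hj => ?_)
  · obtain ⟨d, hd⟩ : ∃ d, k + 1 = j + d := ⟨k + 1 - j, by omega⟩
    simp only [twistSet, twistFun_natCast, mem_leftOrth_essImageSet_iff]
    intro x hx
    rw [hd, subsingleton_hom_powNat_add_iff]
    exact mem_leftOrth_iff.1 (hb_twist d (by omega) (by omega)) x
      (hL.subset_of_le (Nat.zero_le _) j.isLt hx)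
  · obtain ⟨d, hd⟩ : ∃ d, (j : ℕ) = k + 1 + d := ⟨j - (k + 1), by omega⟩
    simp only [twistSet, twistFun_natCast, mem_rightOrth_essImageSet_iff]
    intro x hx
    rw [hd, subsingleton_hom_powNat_add_iff]
    rcases Nat.eq_zero_or_pos d with rfl | hd₀
    · exact mem_rightOrth_iff.1 hb₁ x (hd ▸ hx)
    · exact mem_leftOrth_iff.1 (hL.powNat_mem_leftOrth hd₀ (by omega)
        (hL.subset_of_le (by omega) (by omega) hx)) b
        (hL.subset_of_le (Nat.zero_le k) (by omega) hb)

lemma leftOrth_inter_subset (hL : IsLefschetz τ i A) {k : ℕ} (hki : k + 1 < i) :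
    leftOrth (twistSet τ (-(k + 1 : ℕ)) (A 0)) ∩ A k ⊆ A (k + 1) := by
  rintro t ⟨ht₀, htk⟩
  obtain ⟨hA, -, _⟩ := hL.adm (k + 1) hki
  obtain ⟨a, b, f, g, h, hT, ha, hb₁⟩ := hA.exists_distTriang_mem_rightOrth t
  have hb₀ : b ∈ leftOrth (twistSet τ (-(k + 1 : ℕ)) (A 0)) := by
    intro z hz φ
    obtain ⟨ψ, rfl⟩ := Triangle.yoneda_exact₃ _ hT φ (ht₀ hz _)
    rw [show ψ = 0 from hL.subset_leftOrth (by omega) hki (hA.shift_mem 1 ha) hz ψ]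
    exact comp_zero
  have hb : b ∈ A k :=
    (hL.adm k (by omega)).1.cone_mem _ hT (hL.subset_of_le (by omega) hki ha) htk
  have : IsIso f := (Triangle.isZero₃_iff_isIso₁ _ hT).1
    (hL.isZero_of_mem_leftOrth_of_mem_rightOrth hki hb hb₁ hb₀)
  exact hA.iso_mem (asIso f) ha

lemma eq_leftOrth_inter (hL : IsLefschetz τ i A) {m : ℕ} (hm : 0 < m) (hmi : m < i) :
    A m = leftOrth (twistSet τ (-m) (A 0)) ∩ A (m - 1) := by
  obtain ⟨k, rfl⟩ : ∃ k, m = k + 1 := ⟨m - 1, by omega⟩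
  rw [Nat.add_sub_cancel]
  exact (Set.subset_inter (hL.subset_leftOrth hm hmi) (hL.subset_of_le (by omega) hmi)).antisymm
    (hL.leftOrth_inter_subset hmi)

lemma apply_eq_of_apply_zero_eq (hL : IsLefschetz τ i A) {A' : ℕ → Set C}
    (hL' : IsLefschetz τ i A')
    (h₀ : A 0 = A' 0) : ∀ m < i, A m = A' m
  | 0, _ => h₀
  | m + 1, hm => by
    rw [hL.eq_leftOrth_inter (m := m + 1) (by omega) hm,
      hL'.eq_leftOrth_inter (m := m + 1) (by omega) hm, h₀,
      Nat.add_sub_cancel, hL.apply_eq_of_apply_zero_eq hL' h₀ m (by omega)]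

end IsLefschetz

theorem statement15_general (τ : C ≌ C)
    (i : ℕ) (A : ℕ → Set C) (hL : IsLefschetz τ i A) :
    (∀ m : ℕ, 1 ≤ m → m ≤ i - 1 →
      A m = leftOrth (twistSet τ (-(m : ℤ)) (A 0)) ∩ A (m - 1)) ∧
    (∀ A' : ℕ → Set C, IsLefschetz τ i A' → A 0 = A' 0 →
      ∀ m : ℕ, m < i → A m = A' m) :=
  ⟨fun _ hm hmi => hL.eq_leftOrth_inter hm (by have := hL.pos; omega),
    fun _ hL' h₀ => hL.apply_eq_of_apply_zero_eq hL' h₀⟩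

/-- in a Lefschetz decomposition
`T = ⟨A 0, (A 1)(1), …, (A (i-1))(i-1)⟩` with respect to `τ`, each component is recovered
from the first: for `1 ≤ m ≤ i - 1`, `A m = ^⊥((A 0)(-m)) ∩ A (m-1)`.  In particular a
Lefschetz decomposition with respect to `τ` is completely determined by its first
component `A 0`. -/
theorem statement15 (τ : C ≌ C) [τ.functor.CommShift ℤ] [τ.functor.IsTriangulated]
    (i : ℕ) (A : ℕ → Set C) (hL : IsLefschetz τ i A) :
    (∀ m : ℕ, 1 ≤ m → m ≤ i - 1 →
      A m = leftOrth (twistSet τ (-(m : ℤ)) (A 0)) ∩ A (m - 1)) ∧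
    (∀ A' : ℕ → Set C, IsLefschetz τ i A' → A 0 = A' 0 →
      ∀ m : ℕ, m < i → A m = A' m) :=
  statement15_general τ i A hL

end Statements
end HPD
end
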